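/- arXiv:2404.09072 — 6 statements merged into one kernel-verified Lean document; each statement's English description precedes it below -/
import Mathlib

section
/- With the weighted left creation operators W associated to positive weights {b_α} and with g^{-1} = 1 + ∑ a_γ Z_γ the inverse series, the boundedness condition sup_N ‖∑_{0≤|β|≤N} a_β W_β W_β*‖ < ∞ holds if and only if sup over N∈ℕ and words α of |∑_{0≤|β|≤N, βγ=α} a_β b_γ / b_α| is finite. In fact, for each N the operator ∑_{0≤|β|≤N} a_β W_β W_β* is diagonal with ‖∑_{0≤|β|≤N} a_β W_β W_β*‖ = sup_{α∈F_n^+} |∑_{βγ=α, 0≤|β|≤N} a_β b_γ / b_α|. -/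
open scoped ENNReal

noncomputable section

/-- Words over the alphabet `Fin n`: elements of the free monoid `F_n^+`. -/
abbrev Word (n : ℕ) := List (Fin n)

/-- The full Fock space `F²(H_n)`, with orthonormal basis indexed by words. -/
abbrev Fock (n : ℕ) := lp (fun _ : Word n => ℂ) 2

/-- The basis vector `e_α` of the full Fock space. -/
def fockE {n : ℕ} (α : Word n) : Fock n := lp.single 2 α 1

/-- The operator `W_β = W_{i₁} ⋯ W_{i_k}` for a word `β = g_{i₁}⋯g_{i_k}`. -/
def Wword {n : ℕ} (W : Fin n → (Fock n →L[ℂ] Fock n)) (β : Word n) :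
    Fock n →L[ℂ] Fock n := (β.map W).prod

/-- The partial sums `∑_{0 ≤ |β| ≤ N} a_β W_β W_β*`. -/
def partialSumOp {n : ℕ} (a : Word n → ℝ) (W : Fin n → (Fock n →L[ℂ] Fock n)) (N : ℕ) :
    Fock n →L[ℂ] Fock n :=
  ∑ p ∈ Finset.range (N + 1), ∑ f : Fin p → Fin n,
    (a (List.ofFn f) : ℂ) •
      (Wword W (List.ofFn f) * ContinuousLinearMap.adjoint (Wword W (List.ofFn f)))

/-- The diagonal entry `∑_{βγ=α, 0≤|β|≤N} a_β b_γ / b_α` of `∑_{0≤|β|≤N} a_β W_β W_β*`. -/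
def dcoef {n : ℕ} (a b : Word n → ℝ) (N : ℕ) (α : Word n) : ℝ :=
  ∑ k ∈ (Finset.range (α.length + 1)).filter (fun k => k ≤ N),
    a (α.take k) * b (α.drop k) / b α

/-! Since `W_β W_β*` sends `e_α` to `(b_γ / b_α) e_α` when `α = βγ` and kills `e_α` when `β` is not
a prefix of `α`, every partial sum `∑_{|β| ≤ N} a_β W_β W_β*` is diagonal in the basis `(e_α)`.
A bounded diagonal operator on `ℓ^p` multiplies each coordinate by its diagonal entry, so its norm
is the supremum of the moduli of these entries; the equivalence of the two boundedness conditions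
is then immediate. -/

namespace lp

variable {ι 𝕜 : Type*} [DecidableEq ι] [RCLike 𝕜] {p : ℝ≥0∞} [Fact (1 ≤ p)]

def IsDiagonalWith (T : lp (fun _ : ι => 𝕜) p →L[𝕜] lp (fun _ : ι => 𝕜) p) (d : ι → 𝕜) :
    Prop :=
  ∀ i, T (lp.single p i (1 : 𝕜)) = d i • lp.single p i (1 : 𝕜)

variable {T : lp (fun _ : ι => 𝕜) p →L[𝕜] lp (fun _ : ι => 𝕜) p} {d : ι → 𝕜}

theorem IsDiagonalWith.apply (hT : IsDiagonalWith T d) (hp : p ≠ ⊤) (x : lp (fun _ : ι => 𝕜) p)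
    (j : ι) : T x j = d j * x j := by
  suffices (evalCLM 𝕜 _ p j).comp T = d j • evalCLM 𝕜 _ p j from
    congr($this x)
  refine ext_continuousLinearMap hp fun i => ContinuousLinearMap.ext fun c => ?_
  have hsingle : lp.single (E := fun _ : ι => 𝕜) p i c = c • lp.single p i 1 := by
    rw [← lp.single_smul, smul_eq_mul, mul_one]
  simp only [ContinuousLinearMap.comp_apply, singleContinuousLinearMap_apply, hsingle, map_smul,
    hT i, smul_apply]
  by_cases hij : j = i <;> simp [evalCLM, hij]

theorem IsDiagonalWith.norm_le_opNorm (hT : IsDiagonalWith T d) (i : ι) : ‖d i‖ ≤ ‖T‖ := by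
  have hp0 : (0 : ℝ≥0∞) < p := zero_lt_one.trans_le Fact.out
  simpa [hT i, norm_smul, lp.norm_single hp0] using T.le_opNorm (lp.single p i (1 : 𝕜))

theorem IsDiagonalWith.opNorm_eq (hT : IsDiagonalWith T d) (hp : p ≠ ⊤) :
    ‖T‖ = ⨆ i, ‖d i‖ := by
  have hp0 : (0 : ℝ≥0∞) < p := zero_lt_one.trans_le Fact.out
  have hle := hT.norm_le_opNorm
  refine le_antisymm (T.opNorm_le_bound (Real.iSup_nonneg fun i => norm_nonneg _) fun x => ?_)
    (Real.iSup_le hle (norm_nonneg _))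
  have hbdd : BddAbove (Set.range fun i => ‖d i‖) := ⟨‖T‖, Set.forall_mem_range.2 hle⟩
  have hM := Real.iSup_nonneg fun i => norm_nonneg (d i)
  calc ‖T x‖ ≤ ‖((⨆ i, ‖d i‖ : ℝ) : 𝕜) • x‖ := norm_mono hp0.ne' fun j => by
        rw [hT.apply hp, norm_mul, coeFn_smul, Pi.smul_apply, norm_smul, RCLike.norm_ofReal,
          abs_of_nonneg hM]
        exact mul_le_mul_of_nonneg_right (le_ciSup hbdd j) (norm_nonneg _)
    _ = (⨆ i, ‖d i‖) * ‖x‖ := by rw [norm_smul, RCLike.norm_ofReal, abs_of_nonneg hM]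

end lp

theorem List.sum_ofFn_ite_prefix {X M : Type*} [Fintype X] [DecidableEq X] [AddCommMonoid M]
    (g : List X → M) (p : ℕ) (α : List X) :
    ∑ f : Fin p → X, (if List.ofFn f <+: α then g (List.ofFn f) else 0) =
      if p ≤ α.length then g (α.take p) else 0 := by
  have hprefix : ∀ f : Fin p → X, List.ofFn f <+: α ↔ List.ofFn f = α.take p := fun f => by
    rw [List.prefix_iff_eq_take, List.length_ofFn]
  simp only [hprefix]
  split_ifs with h
  · have hlen : (α.take p).length = p := by simp [h]
    generalize α.take p = L at hlen ⊢
    subst hlen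
    have hget : ∀ f, List.ofFn f = L ↔ f = L.get := fun f =>
      ⟨fun hf => List.ofFn_injective (hf.trans (List.ofFn_get L).symm),
        fun hf => hf ▸ List.ofFn_get L⟩
    simp only [hget, Finset.sum_ite_eq', Finset.mem_univ, if_true, List.ofFn_get]
  · refine Finset.sum_eq_zero fun f _ => if_neg fun hf => h ?_
    simpa using congr_arg List.length hf

open scoped InnerProductSpace InnerProduct

section Fock

variable {n : ℕ}

theorem inner_fockE_left (γ : Word n) (v : Fock n) : ⟪fockE γ, v⟫_ℂ = v γ := by
  simp [fockE, lp.inner_single_left]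

theorem fockE_apply (α γ : Word n) : fockE α γ = if γ = α then 1 else 0 := by
  simp [fockE, lp.single_apply, Pi.single_apply]

theorem Wword_cons (W : Fin n → (Fock n →L[ℂ] Fock n)) (i : Fin n) (β : Word n) :
    Wword W (i :: β) = W i * Wword W β := by
  simp [Wword]

variable {b : Word n → ℝ} (hbpos : ∀ α, 0 < b α) {W : Fin n → (Fock n →L[ℂ] Fock n)}
  (hW : ∀ i α, W i (fockE α) = (√(b α / b (i :: α)) : ℂ) • fockE (i :: α))
include hbpos hW

theorem Wword_apply_fockE (β α : Word n) :
    Wword W β (fockE α) = (√(b α / b (β ++ α)) : ℂ) • fockE (β ++ α) := by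
  induction β with
  | nil => simp [Wword, div_self (hbpos α).ne']
  | cons i β ih =>
    rw [Wword_cons, mul_apply_eq_comp, ih, map_smul, hW, smul_smul, List.cons_append,
      ← Complex.ofReal_mul, ← Real.sqrt_mul (div_nonneg (hbpos _).le (hbpos _).le),
      div_mul_div_cancel₀ (hbpos _).ne']

theorem adjoint_Wword_apply_fockE (β α : Word n) :
    ((Wword W β)†) (fockE α) =
      if β <+: α then (√(b (α.drop β.length) / b α) : ℂ) • fockE (α.drop β.length) else 0 := by
  refine lp.ext (funext fun γ => ?_)
  rw [← inner_fockE_left, ContinuousLinearMap.adjoint_inner_right,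
    Wword_apply_fockE hbpos hW, inner_smul_left, inner_fockE_left, Complex.conj_ofReal]
  by_cases h : β <+: α
  · obtain ⟨δ, rfl⟩ := h
    rw [if_pos (List.prefix_append β δ), List.drop_left, lp.coeFn_smul, Pi.smul_apply,
      fockE_apply, fockE_apply]
    by_cases hγ : γ = δ <;> simp [hγ]
  · rw [if_neg h, fockE_apply, if_neg fun (he : β ++ γ = α) => h (he ▸ List.prefix_append β γ)]
    simp

theorem Wword_mul_adjoint_apply_fockE (β α : Word n) :
    (Wword W β * (Wword W β)†) (fockE α) =
      ((if β <+: α then b (α.drop β.length) / b α else 0 : ℝ) : ℂ) • fockE α := by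
  rw [mul_apply_eq_comp, adjoint_Wword_apply_fockE hbpos hW]
  split_ifs with h
  · rw [map_smul, Wword_apply_fockE hbpos hW, List.prefix_iff_eq_append.1 h, smul_smul,
      ← Complex.ofReal_mul, Real.mul_self_sqrt (div_nonneg (hbpos _).le (hbpos _).le)]
  · simp

theorem partialSumOp_apply_fockE (a : Word n → ℝ) (N : ℕ) (α : Word n) :
    partialSumOp a W N (fockE α) = (dcoef a b N α : ℂ) • fockE α := by
  have hfixedLength : ∀ p, ∑ f : Fin p → Fin n,
      ((a (List.ofFn f) : ℂ) • (Wword W (List.ofFn f) * (Wword W (List.ofFn f))†)) (fockE α) =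
        ((if p ≤ α.length then a (α.take p) * b (α.drop p) / b α else 0 : ℝ) : ℂ) • fockE α :=
    fun p => by
      simp only [smul_apply, Wword_mul_adjoint_apply_fockE hbpos hW, smul_smul,
        List.length_ofFn, ← Complex.ofReal_mul, mul_ite, mul_zero, ← mul_div_assoc,
        ← Finset.sum_smul, ← Complex.ofReal_sum,
        List.sum_ofFn_ite_prefix (fun β => a β * b (α.drop p) / b α)]
  simp only [partialSumOp, sum_apply, hfixedLength, ← Finset.sum_smul, ← Complex.ofReal_sum,
    ← Finset.sum_filter, dcoef]
  congr 3
  ext k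
  simp only [Finset.mem_filter, Finset.mem_range]
  omega

end Fock

theorem stmt5_general {n : ℕ} (a b : Word n → ℝ) (hbpos : ∀ α, 0 < b α)
    (W : Fin n → (Fock n →L[ℂ] Fock n))
    (hW : ∀ (i : Fin n) (α : Word n), W i (fockE α) =
      (Real.sqrt (b α / b (i :: α)) : ℂ) • fockE (i :: α)) :
    (∀ (N : ℕ) (α : Word n),
      partialSumOp a W N (fockE α) = (dcoef a b N α : ℂ) • fockE α) ∧
    (∀ N : ℕ, ‖partialSumOp a W N‖ = ⨆ α : Word n, |dcoef a b N α|) ∧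
    ((∃ C : ℝ, ∀ N : ℕ, ‖partialSumOp a W N‖ ≤ C) ↔
      (∃ C : ℝ, ∀ (N : ℕ) (α : Word n), |dcoef a b N α| ≤ C)) := by
  have hdiag (N : ℕ) : lp.IsDiagonalWith (partialSumOp a W N) (fun α => (dcoef a b N α : ℂ)) :=
    partialSumOp_apply_fockE hbpos hW a N
  have hnorm (N : ℕ) : ‖partialSumOp a W N‖ = ⨆ α : Word n, |dcoef a b N α| := by
    simpa only [Complex.norm_real, Real.norm_eq_abs] using (hdiag N).opNorm_eq (by norm_num)
  refine ⟨partialSumOp_apply_fockE hbpos hW a, hnorm, ⟨fun ⟨C, hC⟩ => ⟨C, fun N α => ?_⟩,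
    fun ⟨C, hC⟩ => ⟨C, fun N => hnorm N ▸ ciSup_le (hC N)⟩⟩⟩
  simpa only [Complex.norm_real, Real.norm_eq_abs] using ((hdiag N).norm_le_opNorm α).trans (hC N)

/-- for the weighted left creation operators `W` associated to positive
weights `b` (with `b_{g₀}=1` and `sup_α b_α/b_{g_iα} < ∞`) and inverse coefficients `a`
(with `a_{g₀}=1`), each operator `∑_{0≤|β|≤N} a_β W_β W_β*` is diagonal with norm
`sup_α |∑_{βγ=α, 0≤|β|≤N} a_β b_γ / b_α|`; consequently the partial sums are uniformly
norm-bounded iff the diagonal entries are uniformly bounded. -/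
theorem stmt5 {n : ℕ} (a b : Word n → ℝ) (hbpos : ∀ α, 0 < b α) (hb0 : b [] = 1)
    (ha0 : a [] = 1)
    (hsup : ∀ i : Fin n, ∃ C : ℝ, ∀ α, b α / b (i :: α) ≤ C)
    (hinv : ∀ γ : Word n, γ ≠ [] →
      b γ + ∑ k ∈ Finset.Icc 1 γ.length, a (γ.take k) * b (γ.drop k) = 0)
    (W : Fin n → (Fock n →L[ℂ] Fock n))
    (hW : ∀ (i : Fin n) (α : Word n), W i (fockE α) =
      (Real.sqrt (b α / b (i :: α)) : ℂ) • fockE (i :: α)) :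
    (∀ (N : ℕ) (α : Word n),
      partialSumOp a W N (fockE α) = (dcoef a b N α : ℂ) • fockE α) ∧
    (∀ N : ℕ, ‖partialSumOp a W N‖ = ⨆ α : Word n, |dcoef a b N α|) ∧
    ((∃ C : ℝ, ∀ N : ℕ, ‖partialSumOp a W N‖ ≤ C) ↔
      (∃ C : ℝ, ∀ (N : ℕ) (α : Word n), |dcoef a b N α| ≤ C)) :=
  stmt5_general a b hbpos W hW
end
end

section
/- Let g^{-1} = 1 + ∑_{|γ|≥1} a_γ Z_γ be the inverse of g = 1 + ∑ b_α Z_α with b_α > 0, and let X = (X_1,…,X_n) be a tuple of bounded operators on a Hilbert space H such that ∑_{p=1}^∞ ∑_{|α|=p} |a_α| X_α X_α* ≤ c·I for some c ∈ (0,1). Then Δ(X) := I + ∑_{p=1}^∞ ∑_{|α|=p} a_α X_α X_α* is a positive operator and ∑_{β∈F_n^+} b_β X_β Δ(X) X_β* = I, with convergence in the weak operator topology. -/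
open scoped ENNReal Topology

noncomputable section

/-- The operator `X_α = X_{i₁} ⋯ X_{i_k}` for a word `α = g_{i₁}⋯g_{i_k}` (`X_{g₀} = I`). -/
def opWord {n : ℕ} {H : Type*} [NormedAddCommGroup H] [InnerProductSpace ℂ H]
    (X : Fin n → (H →L[ℂ] H)) (α : Word n) : H →L[ℂ] H := (α.map X).prod

/-!
Write `T_α = X_α*`, so that `T_{βα} = T_α T_β`. The hypothesis bounds `∑ |a_α| ‖T_α x‖²` by
`(1 + c) ‖x‖²`, so by Cauchy–Schwarz `∑ a_α ⟨T_α x, T_α y⟩` converges absolutely to a bounded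
sesquilinear form, the form `⟨x, Δ y⟩` of an operator `Δ`; on the diagonal it is at least
`‖x‖² - c ‖x‖²`.

Since `g⁻¹ g = 1`, the truncations `V_N(x) = ∑_{|β| ≤ N} b_β ‖T_β x‖²` satisfy
`V_N(x) = ‖x‖² - ∑_{1 ≤ |γ| ≤ N} a_γ V_{N - |γ|}(T_γ x)`, and induction on `N` gives
`V_N(x) ≤ ‖x‖² / (1 - c)`. Hence the double series `∑_{β, α} b_β a_α ⟨T_{βα} x, T_{βα} y⟩`
converges absolutely. Summing over `α` first gives `∑_β b_β ⟨T_β x, Δ T_β y⟩`; grouping by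
`γ = βα` gives `∑_γ (g g⁻¹)_γ ⟨T_γ x, T_γ y⟩ = ⟨x, y⟩`, because a one-sided inverse of a series
with constant term `1` is two-sided.
-/

open Finset
open scoped InnerProductSpace InnerProduct

theorem Finset.sum_range_succ_eq_add_sum_Icc {M : Type*} [AddCommMonoid M] (f : ℕ → M) (N : ℕ) :
    ∑ p ∈ range (N + 1), f p = f 0 + ∑ p ∈ Icc 1 N, f p := by
  rw [range_eq_Ico, ← Ico_add_one_right_eq_Icc]
  exact sum_eq_sum_Ico_succ_bot N.succ_pos f

namespace Word

variable {n : ℕ}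

def upTo (n N : ℕ) : Finset (Word n) :=
  ((range (N + 1)).sigma fun _ => univ).map List.equivSigmaTuple.symm.toEmbedding

theorem mem_upTo {N : ℕ} {α : Word n} : α ∈ upTo n N ↔ α.length ≤ N := by
  simp only [upTo, Finset.mem_map, mem_sigma, mem_range, mem_univ, and_true, Equiv.coe_toEmbedding,
    Sigma.exists, List.equivSigmaTuple_symm_apply]
  constructor
  · rintro ⟨p, f, hp, rfl⟩
    simpa [Nat.lt_succ_iff] using hp
  · intro h
    exact ⟨α.length, α.get, Nat.lt_succ_of_le h, List.ofFn_get α⟩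

theorem nil_mem_upTo (N : ℕ) : ([] : Word n) ∈ upTo n N := mem_upTo.2 (Nat.zero_le N)

theorem sum_upTo {M : Type*} [AddCommMonoid M] (g : Word n → M) (N : ℕ) :
    ∑ α ∈ upTo n N, g α = ∑ p ∈ range (N + 1), ∑ f : Fin p → Fin n, g (List.ofFn f) := by
  rw [upTo, sum_map, sum_sigma]
  rfl

theorem sum_upTo_eq_add_sum_Icc {M : Type*} [AddCommMonoid M] (g : Word n → M)
    (N : ℕ) :
    ∑ α ∈ upTo n N, g α = g [] + ∑ p ∈ Icc 1 N, ∑ f : Fin p → Fin n, g (List.ofFn f) := by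
  rw [sum_upTo, sum_range_succ_eq_add_sum_Icc]
  simp

theorem upTo_mono : Monotone (upTo n) :=
  fun _ _ hNM _ hα => mem_upTo.2 ((mem_upTo.1 hα).trans hNM)

theorem tendsto_upTo_atTop : Filter.Tendsto (upTo n) Filter.atTop Filter.atTop :=
  Filter.tendsto_atTop_finset_of_monotone upTo_mono fun α => ⟨α.length, mem_upTo.2 le_rfl⟩

theorem _root_.HasSum.tendsto_sum_upTo {M : Type*} [AddCommMonoid M] [TopologicalSpace M]
    {g : Word n → M} {s : M} (h : HasSum g s) :
    Filter.Tendsto (fun N => ∑ α ∈ upTo n N, g α) Filter.atTop (𝓝 s) :=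
  h.comp tendsto_upTo_atTop

theorem subset_upTo_sup_length (s : Finset (Word n)) : s ⊆ upTo n (s.sup List.length) :=
  fun _ hα => mem_upTo.2 (le_sup hα)

theorem sum_le_of_forall_sum_upTo_le {f : Word n → ℝ} {C : ℝ} (hf : 0 ≤ f)
    (h : ∀ N, ∑ α ∈ upTo n N, f α ≤ C) (s : Finset (Word n)) : ∑ α ∈ s, f α ≤ C :=
  (sum_le_sum_of_subset_of_nonneg (subset_upTo_sup_length s) fun α _ _ => hf α).trans (h _)

/-- The coefficients of the product of the noncommutative power series `∑ f_α Z_α` and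
`∑ g_α Z_α`. -/
def conv {R : Type*} [Semiring R] (f g : Word n → R) (γ : Word n) : R :=
  ∑ k ∈ range (γ.length + 1), f (γ.take k) * g (γ.drop k)

variable {R : Type*}

theorem conv_nil [Semiring R] (f g : Word n → R) : conv f g [] = f [] * g [] := by
  simp [conv]

theorem conv_assoc [Semiring R] (f g h : Word n → R) (γ : Word n) :
    conv (conv f g) h γ = conv f (conv g h) γ := by
  have length_take : ∀ j ∈ range (γ.length + 1), (γ.take j).length = j := fun j hj => by
    simp only [mem_range] at hj; simp only [List.length_take]; omega
  calc conv (conv f g) h γ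
      = ∑ j ∈ range (γ.length + 1), ∑ i ∈ range (j + 1),
          f (γ.take i) * g ((γ.take j).drop i) * h (γ.drop j) := by
        refine sum_congr rfl fun j hj => ?_
        rw [conv, length_take j hj, sum_mul]
        refine sum_congr rfl fun i hi => ?_
        rw [List.take_take, min_eq_left (Nat.lt_succ_iff.1 (mem_range.1 hi))]
    _ = ∑ i ∈ range (γ.length + 1), ∑ j ∈ Ico i (γ.length + 1),
          f (γ.take i) * g ((γ.take j).drop i) * h (γ.drop j) :=
        sum_comm' fun j i => by simp only [mem_range, mem_Ico]; omega
    _ = ∑ i ∈ range (γ.length + 1), ∑ m ∈ range ((γ.drop i).length + 1),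
          f (γ.take i) * (g ((γ.drop i).take m) * h ((γ.drop i).drop m)) := by
        refine sum_congr rfl fun i hi => ?_
        rw [sum_Ico_eq_sum_range, List.length_drop,
          show γ.length + 1 - i = γ.length - i + 1 by simp only [mem_range] at hi; omega]
        refine sum_congr rfl fun m _ => ?_
        rw [List.drop_take, List.drop_drop, Nat.add_sub_cancel_left, mul_assoc]
    _ = conv f (conv g h) γ := by simp only [conv, mul_sum]

theorem conv_swap_eq_zero [Ring R] {a b : Word n → R} (ha : a [] = 1) (hb : b [] = 1)
    (hab : ∀ γ : Word n, γ ≠ [] → conv a b γ = 0) (γ : Word n) (hγ : γ ≠ []) :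
    conv b a γ = 0 := by
  induction hL : γ.length using Nat.strong_induction_on generalizing γ with
  | _ L ih =>
  have hpos : 0 < γ.length := List.length_pos_iff.2 hγ
  -- evaluate `(b * a) * b = b * (a * b)` at `γ`; the induction hypothesis kills the middle terms
  have lhs : conv (conv b a) b γ = conv b a γ + b γ := by
    rw [conv, sum_range_succ, sum_eq_single 0]
    · simp [conv_nil, ha, hb, add_comm]
    · intro j hj hj0
      have hjL : j < γ.length := mem_range.1 hj
      rw [ih j (hL ▸ hjL) _ (by simp [hj0, hγ]) (by simp only [List.length_take]; omega),
        zero_mul]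
    · exact fun h => absurd (mem_range.2 hpos) h
  have rhs : conv b (conv a b) γ = b γ := by
    rw [conv, sum_eq_single γ.length]
    · simp [conv_nil, ha, hb]
    · intro k hk hkL
      have hk' := mem_range.1 hk
      rw [hab _ (by rw [ne_eq, List.drop_eq_nil_iff]; omega), mul_zero]
    · exact fun h => absurd (self_mem_range_succ _) h
  simpa [lhs, rhs] using conv_assoc b a b γ

theorem sum_upTo_sum_take_drop {M : Type*} [AddCommMonoid M] (F : Word n → Word n → M)
    (N : ℕ) :
    ∑ β ∈ upTo n N, ∑ k ∈ range (β.length + 1), F (β.take k) (β.drop k) =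
      ∑ γ ∈ upTo n N, ∑ α ∈ upTo n (N - γ.length), F γ α := by
  rw [sum_sigma', sum_sigma']
  refine sum_nbij' (fun p => ⟨p.1.take p.2, p.1.drop p.2⟩) (fun q => ⟨q.1 ++ q.2, q.1.length⟩)
    ?_ ?_ ?_ ?_ ?_
  · rintro ⟨β, k⟩ hp
    simp only [mem_sigma, mem_upTo, mem_range, List.length_take, List.length_drop] at hp ⊢
    omega
  · rintro ⟨γ, α⟩ hq
    simp only [mem_sigma, mem_upTo, mem_range, List.length_append] at hq ⊢
    omega
  · rintro ⟨β, k⟩ hp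
    simp only [mem_sigma, mem_range] at hp
    refine Sigma.ext (List.take_append_drop k β) (heq_of_eq ?_)
    simp only [List.length_take]
    omega
  · rintro ⟨γ, α⟩ -
    exact Sigma.ext List.take_left (heq_of_eq List.drop_left)
  · rintro ⟨β, k⟩ -
    rfl

def splitEquiv : (Σ γ : Word n, Fin (γ.length + 1)) ≃ Word n × Word n where
  toFun s := (s.1.take s.2, s.1.drop s.2)
  invFun p := ⟨p.1 ++ p.2, ⟨p.1.length, by simp⟩⟩
  left_inv := by
    rintro ⟨γ, k⟩
    refine Sigma.ext (List.take_append_drop k γ) ?_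
    rw [Fin.heq_ext_iff (by simp only [List.take_append_drop])]
    simp only [List.length_take]
    omega
  right_inv := by
    rintro ⟨β, α⟩
    simp only [List.take_left, List.drop_left]

theorem _root_.HasSum.sum_take_drop {M : Type*} [AddCommMonoid M] [TopologicalSpace M]
    [ContinuousAdd M] [RegularSpace M] {F : Word n → Word n → M} {s : M}
    (h : HasSum (fun p : Word n × Word n => F p.1 p.2) s) :
    HasSum (fun γ : Word n => ∑ k ∈ range (γ.length + 1), F (γ.take k) (γ.drop k)) s := by
  refine (splitEquiv.hasSum_iff.2 h).sigma fun γ => ?_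
  rw [← Fin.sum_univ_eq_sum_range (fun k => F (γ.take k) (γ.drop k))]
  exact hasSum_fintype _

end Word

section Operators

variable {n : ℕ} {H : Type*} [NormedAddCommGroup H] [InnerProductSpace ℂ H] [CompleteSpace H]
  (X : Fin n → H →L[ℂ] H)

theorem adjoint_opWord_nil (x : H) : ((opWord X [])†) x = x := by
  simp [opWord, ContinuousLinearMap.adjoint_one]

theorem adjoint_opWord_append (β α : Word n) (x : H) :
    ((opWord X (β ++ α))†) x = ((opWord X α)†) (((opWord X β)†) x) := by
  simp only [opWord, List.map_append, List.prod_append, ContinuousLinearMap.mul_def,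
    ContinuousLinearMap.adjoint_comp, ContinuousLinearMap.comp_apply]

end Operators

theorem sum_mul_norm_mul_norm_le {ι E : Type*} [SeminormedAddCommGroup E] (s : Finset ι)
    {w : ι → ℝ} (hw : 0 ≤ w) (u v : ι → E) :
    ∑ i ∈ s, w i * (‖u i‖ * ‖v i‖) ≤
      √(∑ i ∈ s, w i * ‖u i‖ ^ 2) * √(∑ i ∈ s, w i * ‖v i‖ ^ 2) := by
  refine le_of_eq_of_le (sum_congr rfl fun i _ => ?_)
    (Real.sum_sqrt_mul_sqrt_le s (fun i => mul_nonneg (hw i) (sq_nonneg ‖u i‖))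
      (fun i => mul_nonneg (hw i) (sq_nonneg ‖v i‖)))
  have hwi : 0 ≤ w i := hw i
  rw [← Real.sqrt_mul (by positivity),
    show w i * ‖u i‖ ^ 2 * (w i * ‖v i‖ ^ 2) = (w i * (‖u i‖ * ‖v i‖)) ^ 2 by ring,
    Real.sqrt_sq (by positivity)]

theorem summable_mul_norm_mul_norm {ι E : Type*} [SeminormedAddCommGroup E] {w : ι → ℝ}
    (hw : 0 ≤ w) {u v : ι → E} (hu : Summable fun i => w i * ‖u i‖ ^ 2)
    (hv : Summable fun i => w i * ‖v i‖ ^ 2) :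
    Summable fun i => w i * (‖u i‖ * ‖v i‖) :=
  (hu.add hv).of_nonneg_of_le (fun i => mul_nonneg (hw i) (by positivity)) fun i => by
    nlinarith [mul_nonneg (hw i) (sq_nonneg (‖u i‖ - ‖v i‖)),
      mul_nonneg (hw i) (mul_nonneg (norm_nonneg (u i)) (norm_nonneg (v i)))]

theorem norm_ofReal_mul_inner_le {E : Type*} [NormedAddCommGroup E] [InnerProductSpace ℂ E]
    (r : ℝ) (u v : E) : ‖(r : ℂ) * ⟪u, v⟫_ℂ‖ ≤ |r| * (‖u‖ * ‖v‖) := by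
  rw [norm_mul, Complex.norm_real, Real.norm_eq_abs]
  exact mul_le_mul_of_nonneg_left (norm_inner_le_norm u v) (abs_nonneg r)

section Delta

variable {n : ℕ} {H : Type*} [NormedAddCommGroup H] [InnerProductSpace ℂ H] [CompleteSpace H]
  (X : Fin n → H →L[ℂ] H) (a : Word n → ℝ)

/-- The operator inequality `∑_α |a_α| X_α X_α* ≤ C·I`, tested on finite partial sums. -/
def AbsSeriesLE (C : ℝ) : Prop :=
  ∀ (s : Finset (Word n)) (x : H), ∑ α ∈ s, |a α| * ‖((opWord X α)†) x‖ ^ 2 ≤ C * ‖x‖ ^ 2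

/-- The form `⟨x, Δ(X) y⟩` of `Δ(X) = ∑_α a_α X_α X_α*`. -/
def deltaForm (x y : H) : ℂ :=
  ∑' α, (a α : ℂ) * ⟪((opWord X α)†) x, ((opWord X α)†) y⟫_ℂ

variable {X a} {C : ℝ}

theorem absSeriesLE_of_forall_sum_Icc_le {c : ℝ} (ha0 : a [] = 1)
    (hcI : ∀ (N : ℕ) (x : H), (∑ p ∈ Icc 1 N, ∑ f : Fin p → Fin n,
      |a (List.ofFn f)| * ‖((opWord X (List.ofFn f))†) x‖ ^ 2) ≤ c * ‖x‖ ^ 2) :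
    AbsSeriesLE X a (1 + c) := fun s x =>
  Word.sum_le_of_forall_sum_upTo_le (fun α => by positivity) (fun N => by
    rw [Word.sum_upTo_eq_add_sum_Icc]
    simp only [ha0, abs_one, one_mul, adjoint_opWord_nil]
    linarith [hcI N x]) s

namespace AbsSeriesLE

theorem summable (hQ : AbsSeriesLE X a C) (x : H) :
    Summable fun α => |a α| * ‖((opWord X α)†) x‖ ^ 2 :=
  summable_of_sum_le (fun α => by positivity) (hQ · x)

theorem tsum_le (hQ : AbsSeriesLE X a C) (x : H) :
    ∑' α, |a α| * ‖((opWord X α)†) x‖ ^ 2 ≤ C * ‖x‖ ^ 2 :=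
  (hQ.summable x).tsum_le_of_sum_le (hQ · x)

theorem sum_mul_norm_mul_norm_le (hQ : AbsSeriesLE X a C) (hC : 0 ≤ C) (x y : H)
    (s : Finset (Word n)) :
    ∑ α ∈ s, |a α| * (‖((opWord X α)†) x‖ * ‖((opWord X α)†) y‖) ≤ C * (‖x‖ * ‖y‖) := by
  refine (_root_.sum_mul_norm_mul_norm_le s (fun α => abs_nonneg (a α)) _ _).trans ?_
  calc √(∑ α ∈ s, |a α| * ‖((opWord X α)†) x‖ ^ 2) * √(∑ α ∈ s, |a α| * ‖((opWord X α)†) y‖ ^ 2)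
      ≤ √(C * ‖x‖ ^ 2) * √(C * ‖y‖ ^ 2) := by gcongr <;> exact hQ s _
    _ = C * (‖x‖ * ‖y‖) := by
      rw [← Real.sqrt_mul (by positivity),
        show C * ‖x‖ ^ 2 * (C * ‖y‖ ^ 2) = (C * (‖x‖ * ‖y‖)) ^ 2 by ring,
        Real.sqrt_sq (by positivity)]

theorem summable_mul_inner (hQ : AbsSeriesLE X a C) (x y : H) :
    Summable fun α => (a α : ℂ) * ⟪((opWord X α)†) x, ((opWord X α)†) y⟫_ℂ :=
  (summable_mul_norm_mul_norm (fun α => abs_nonneg (a α)) (hQ.summable x)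
    (hQ.summable y)).of_norm_bounded fun _ => norm_ofReal_mul_inner_le _ _ _

theorem norm_deltaForm_le (hQ : AbsSeriesLE X a C) (hC : 0 ≤ C) (x y : H) :
    ‖deltaForm X a x y‖ ≤ C * ‖x‖ * ‖y‖ := by
  have hs := summable_mul_norm_mul_norm (fun α => abs_nonneg (a α)) (hQ.summable x)
    (hQ.summable y)
  refine (tsum_of_norm_bounded hs.hasSum fun _ => norm_ofReal_mul_inner_le _ _ _).trans ?_
  rw [mul_assoc]
  exact hs.tsum_le_of_sum_le (hQ.sum_mul_norm_mul_norm_le hC x y)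

theorem deltaForm_add_left (hQ : AbsSeriesLE X a C) (x x' y : H) :
    deltaForm X a (x + x') y = deltaForm X a x y + deltaForm X a x' y := by
  rw [deltaForm, deltaForm, deltaForm,
    ← (hQ.summable_mul_inner x y).tsum_add (hQ.summable_mul_inner x' y)]
  simp only [map_add, inner_add_left, mul_add]

theorem deltaForm_add_right (hQ : AbsSeriesLE X a C) (x y y' : H) :
    deltaForm X a x (y + y') = deltaForm X a x y + deltaForm X a x y' := by
  rw [deltaForm, deltaForm, deltaForm,
    ← (hQ.summable_mul_inner x y).tsum_add (hQ.summable_mul_inner x y')]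
  simp only [map_add, inner_add_right, mul_add]

end AbsSeriesLE

theorem deltaForm_smul_left (t : ℂ) (x y : H) :
    deltaForm X a (t • x) y = starRingEnd ℂ t * deltaForm X a x y := by
  rw [deltaForm, deltaForm, ← tsum_mul_left]
  simp only [map_smul, inner_smul_left, mul_left_comm]

theorem deltaForm_smul_right (t : ℂ) (x y : H) :
    deltaForm X a x (t • y) = t * deltaForm X a x y := by
  rw [deltaForm, deltaForm, ← tsum_mul_left]
  simp only [map_smul, inner_smul_right, mul_left_comm]

theorem AbsSeriesLE.exists_inner_eq_deltaForm (hQ : AbsSeriesLE X a C)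
    (hC : 0 ≤ C) : ∃ Δ : H →L[ℂ] H, ∀ x y, ⟪x, Δ y⟫_ℂ = deltaForm X a x y := by
  let B : H →ₗ⋆[ℂ] H →ₗ[ℂ] ℂ := LinearMap.mk₂'ₛₗ (starRingEnd ℂ) (RingHom.id ℂ) (deltaForm X a)
    hQ.deltaForm_add_left deltaForm_smul_left hQ.deltaForm_add_right deltaForm_smul_right
  refine ⟨(InnerProductSpace.continuousLinearMapOfBilin
    (B.mkContinuous₂ C (hQ.norm_deltaForm_le hC)))†, fun x y => ?_⟩
  rw [ContinuousLinearMap.adjoint_inner_right, InnerProductSpace.continuousLinearMapOfBilin_apply]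
  rfl

theorem AbsSeriesLE.re_deltaForm_self (hQ : AbsSeriesLE X a C) (ha0 : a [] = 1) (x : H) :
    (2 - C) * ‖x‖ ^ 2 ≤ (deltaForm X a x x).re := by
  set q : Word n → ℝ := fun α => ‖((opWord X α)†) x‖ ^ 2
  have hform : deltaForm X a x x = ((∑' α, a α * q α : ℝ) : ℂ) := by
    rw [Complex.ofReal_tsum, deltaForm]
    simp only [q, inner_self_eq_norm_sq_to_K]
    push_cast
    rfl
  have hs : Summable fun α => a α * q α :=
    (hQ.summable x).of_norm_bounded fun α => by
      rw [Real.norm_eq_abs, abs_mul, abs_of_nonneg (show 0 ≤ q α from sq_nonneg _)]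
  -- `a α q α + |a α| q α ≥ 0`, with value `2 ‖x‖²` at the empty word
  have hsum : 2 * ‖x‖ ^ 2 ≤ ∑' α, (a α * q α + |a α| * q α) := by
    refine le_of_eq_of_le ?_ ((hs.add (hQ.summable x)).le_tsum [] fun α _ => ?_)
    · simp [q, ha0, adjoint_opWord_nil, two_mul]
    · nlinarith [neg_abs_le (a α), sq_nonneg ‖((opWord X α)†) x‖]
  rw [hs.tsum_add (hQ.summable x)] at hsum
  rw [hform, Complex.ofReal_re]
  linarith [hQ.tsum_le x]

end Delta

section InverseSeries

variable {n : ℕ} {H : Type*} [NormedAddCommGroup H] [InnerProductSpace ℂ H] [CompleteSpace H]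
  (X : Fin n → H →L[ℂ] H)

def weightedNormSqUpTo (b : Word n → ℝ) (N : ℕ) (x : H) : ℝ :=
  ∑ β ∈ Word.upTo n N, b β * ‖((opWord X β)†) x‖ ^ 2

theorem weightedNormSqUpTo_nonneg {b : Word n → ℝ} (hb : 0 ≤ b) (N : ℕ) (x : H) :
    0 ≤ weightedNormSqUpTo X b N x :=
  sum_nonneg fun β _ => mul_nonneg (hb β) (sq_nonneg _)

variable {X} {a b : Word n → ℝ}

theorem sum_mul_weightedNormSqUpTo (ha0 : a [] = 1) (hb0 : b [] = 1)
    (hab : ∀ γ : Word n, γ ≠ [] → Word.conv a b γ = 0) (N : ℕ) (x : H) :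
    ∑ γ ∈ Word.upTo n N, a γ * weightedNormSqUpTo X b (N - γ.length) (((opWord X γ)†) x) =
      ‖x‖ ^ 2 := by
  calc ∑ γ ∈ Word.upTo n N, a γ * weightedNormSqUpTo X b (N - γ.length) (((opWord X γ)†) x)
      = ∑ γ ∈ Word.upTo n N, ∑ α ∈ Word.upTo n (N - γ.length),
          a γ * b α * ‖((opWord X (γ ++ α))†) x‖ ^ 2 := by
        simp only [weightedNormSqUpTo, mul_sum, adjoint_opWord_append, mul_assoc]
    _ = ∑ β ∈ Word.upTo n N, Word.conv a b β * ‖((opWord X β)†) x‖ ^ 2 := by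
        rw [← Word.sum_upTo_sum_take_drop]
        simp only [List.take_append_drop, Word.conv, sum_mul]
    _ = ‖x‖ ^ 2 := by
        rw [sum_eq_single_of_mem [] (Word.nil_mem_upTo N) fun β _ hβ => by rw [hab β hβ, zero_mul],
          Word.conv_nil, ha0, hb0, one_mul, one_mul, adjoint_opWord_nil]

theorem weightedNormSqUpTo_le {c : ℝ} (hQ : AbsSeriesLE X a (1 + c)) (hc1 : c < 1)
    (ha0 : a [] = 1) (hb0 : b [] = 1) (hb : 0 ≤ b)
    (hab : ∀ γ : Word n, γ ≠ [] → Word.conv a b γ = 0) (N : ℕ) (x : H) :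
    weightedNormSqUpTo X b N x ≤ ‖x‖ ^ 2 / (1 - c) := by
  induction N using Nat.strong_induction_on generalizing x with
  | _ N ih =>
  have h1c : 0 < 1 - c := by linarith
  have hsplit := sum_mul_weightedNormSqUpTo (X := X) ha0 hb0 hab N x
  have hQN := hQ (Word.upTo n N) x
  rw [← add_sum_erase _ _ (Word.nil_mem_upTo N)] at hsplit hQN
  simp only [ha0, one_mul, abs_one, List.length_nil, Nat.sub_zero, adjoint_opWord_nil]
    at hsplit hQN
  have hterm : ∀ γ ∈ (Word.upTo n N).erase [],
      -(a γ * weightedNormSqUpTo X b (N - γ.length) (((opWord X γ)†) x)) ≤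
        |a γ| * ‖((opWord X γ)†) x‖ ^ 2 / (1 - c) := by
    intro γ hγ
    have hlen : 0 < γ.length := List.length_pos_iff.2 (ne_of_mem_erase hγ)
    have hlenN : γ.length ≤ N := Word.mem_upTo.1 (mem_of_mem_erase hγ)
    have hV := weightedNormSqUpTo_nonneg X hb (N - γ.length) (((opWord X γ)†) x)
    calc -(a γ * weightedNormSqUpTo X b (N - γ.length) (((opWord X γ)†) x))
        ≤ |a γ| * weightedNormSqUpTo X b (N - γ.length) (((opWord X γ)†) x) := by
          rw [← neg_mul]; exact mul_le_mul_of_nonneg_right (neg_le_abs _) hV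
      _ ≤ |a γ| * (‖((opWord X γ)†) x‖ ^ 2 / (1 - c)) :=
          mul_le_mul_of_nonneg_left (ih _ (by omega) _) (abs_nonneg _)
      _ = |a γ| * ‖((opWord X γ)†) x‖ ^ 2 / (1 - c) := by ring
  have htail := sum_le_sum hterm
  rw [sum_neg_distrib, ← sum_div] at htail
  have hx : ‖x‖ ^ 2 / (1 - c) = ‖x‖ ^ 2 + c * ‖x‖ ^ 2 / (1 - c) := by
    field_simp
    ring
  rw [hx]
  have := div_le_div_of_nonneg_right (by linarith : ∑ γ ∈ (Word.upTo n N).erase [],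
    |a γ| * ‖((opWord X γ)†) x‖ ^ 2 ≤ c * ‖x‖ ^ 2) h1c.le
  linarith

theorem summable_mul_norm_sq_of_conv_eq_zero {c : ℝ} (hQ : AbsSeriesLE X a (1 + c))
    (hc1 : c < 1) (ha0 : a [] = 1) (hb0 : b [] = 1) (hb : 0 ≤ b)
    (hab : ∀ γ : Word n, γ ≠ [] → Word.conv a b γ = 0) (x : H) :
    Summable fun β => b β * ‖((opWord X β)†) x‖ ^ 2 :=
  summable_of_sum_le (fun β => mul_nonneg (hb β) (sq_nonneg _))
    (Word.sum_le_of_forall_sum_upTo_le (fun β => mul_nonneg (hb β) (sq_nonneg _))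
      (weightedNormSqUpTo_le hQ hc1 ha0 hb0 hb hab · x))

theorem AbsSeriesLE.summable_mul_abs_mul_norm_sq_append {C : ℝ} (hQ : AbsSeriesLE X a C)
    (hb : 0 ≤ b) {x : H} (hbx : Summable fun β => b β * ‖((opWord X β)†) x‖ ^ 2) :
    Summable fun p : Word n × Word n =>
      b p.1 * (|a p.2| * ‖((opWord X (p.1 ++ p.2))†) x‖ ^ 2) := by
  have hnonneg : 0 ≤ fun p : Word n × Word n =>
      b p.1 * (|a p.2| * ‖((opWord X (p.1 ++ p.2))†) x‖ ^ 2) :=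
    fun p => mul_nonneg (hb p.1) (by positivity)
  refine (summable_prod_of_nonneg hnonneg).2 ⟨fun β => ?_, ?_⟩
  · simp only [adjoint_opWord_append]
    exact (hQ.summable _).mul_left _
  · refine (hbx.mul_left C).of_nonneg_of_le (fun β => tsum_nonneg fun α => hnonneg (β, α))
      fun β => ?_
    simp only [adjoint_opWord_append, tsum_mul_left]
    nlinarith [mul_le_mul_of_nonneg_left (hQ.tsum_le (((opWord X β)†) x)) (hb β)]

theorem hasSum_mul_inner_delta {c : ℝ} (hQ : AbsSeriesLE X a (1 + c)) (hc1 : c < 1)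
    (ha0 : a [] = 1) (hb0 : b [] = 1) (hb : 0 ≤ b)
    (hab : ∀ γ : Word n, γ ≠ [] → Word.conv a b γ = 0)
    (hba : ∀ γ : Word n, γ ≠ [] → Word.conv b a γ = 0)
    {Δ : H →L[ℂ] H} (hΔ : ∀ x y, ⟪x, Δ y⟫_ℂ = deltaForm X a x y) (x y : H) :
    HasSum (fun β => (b β : ℂ) * ⟪((opWord X β)†) x, Δ (((opWord X β)†) y)⟫_ℂ) ⟪x, y⟫_ℂ := by
  set F : Word n → Word n → ℂ := fun β α => (b β : ℂ) *
    ((a α : ℂ) * ⟪((opWord X (β ++ α))†) x, ((opWord X (β ++ α))†) y⟫_ℂ)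
  have hbs := summable_mul_norm_sq_of_conv_eq_zero hQ hc1 ha0 hb0 hb hab
  have hF : Summable fun p : Word n × Word n => F p.1 p.2 :=
    ((hQ.summable_mul_abs_mul_norm_sq_append hb (hbs x)).add
      (hQ.summable_mul_abs_mul_norm_sq_append hb (hbs y))).of_norm_bounded fun ⟨β, α⟩ => by
      set u := ((opWord X (β ++ α))†) x
      set v := ((opWord X (β ++ α))†) y
      have huv : ‖⟪u, v⟫_ℂ‖ ≤ ‖u‖ ^ 2 + ‖v‖ ^ 2 := (norm_inner_le_norm u v).trans
        (by nlinarith [sq_nonneg (‖u‖ - ‖v‖), norm_nonneg u, norm_nonneg v])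
      simp only [F, norm_mul, Complex.norm_real, Real.norm_eq_abs, abs_of_nonneg (hb β)]
      rw [← mul_add, ← mul_add]
      exact mul_le_mul_of_nonneg_left (mul_le_mul_of_nonneg_left huv (abs_nonneg _)) (hb β)
  have hfiber : ∀ β, HasSum (fun α => F β α)
      ((b β : ℂ) * ⟪((opWord X β)†) x, Δ (((opWord X β)†) y)⟫_ℂ) := fun β => by
    simp only [F, adjoint_opWord_append, hΔ, deltaForm]
    exact (hQ.summable_mul_inner _ _).hasSum.mul_left _
  -- regrouped by `γ = β ++ α`, the coefficients become those of `g * g⁻¹ = 1`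
  have hregroup : HasSum (fun γ : Word n => ∑ k ∈ range (γ.length + 1), F (γ.take k) (γ.drop k))
      ⟪x, y⟫_ℂ := by
    convert hasSum_ite_eq ([] : Word n) ⟪x, y⟫_ℂ using 1
    funext γ
    have hconv : ∑ k ∈ range (γ.length + 1), F (γ.take k) (γ.drop k) =
        ((Word.conv b a γ : ℝ) : ℂ) * ⟪((opWord X γ)†) x, ((opWord X γ)†) y⟫_ℂ := by
      simp only [F, List.take_append_drop, ← mul_assoc, ← sum_mul, Word.conv]
      push_cast
      rfl
    rw [hconv]
    split_ifs with hγ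
    · simp [hγ, Word.conv_nil, ha0, hb0, adjoint_opWord_nil]
    · simp [hba γ hγ]
  rw [← hF.hasSum.sum_take_drop.unique hregroup]
  exact hF.hasSum.prod_fiberwise hfiber

end InverseSeries

/-- let `g⁻¹ = 1 + ∑ a_γ Z_γ` be the inverse of `g = 1 + ∑ b_α Z_α` (with
`b_α > 0`), and let `X` be a tuple of operators with `∑_{|α|≥1} |a_α| X_α X_α* ≤ c·I` for
some `c ∈ (0,1)` (expressed via the quadratic forms `∑ |a_α| ‖X_α* x‖² ≤ c ‖x‖²`).  Then
`Δ(X) := I + ∑_{|α|≥1} a_α X_α X_α*` exists as a weak-operator-topology limit, it is a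
positive operator, and `∑_β b_β X_β Δ(X) X_β* = I` in the weak operator topology. -/
theorem stmt6 {n : ℕ} {H : Type*} [NormedAddCommGroup H] [InnerProductSpace ℂ H]
    [CompleteSpace H]
    (a b : Word n → ℝ) (ha0 : a [] = 1) (hb0 : b [] = 1) (hbpos : ∀ α, 0 < b α)
    (hinv : ∀ γ : Word n, γ ≠ [] →
      b γ + ∑ k ∈ Finset.Icc 1 γ.length, a (γ.take k) * b (γ.drop k) = 0)
    (X : Fin n → (H →L[ℂ] H)) (c : ℝ) (hc0 : 0 < c) (hc1 : c < 1)
    (hcI : ∀ (N : ℕ) (x : H),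
      (∑ p ∈ Finset.Icc 1 N, ∑ f : Fin p → Fin n,
        |a (List.ofFn f)| *
          ‖ContinuousLinearMap.adjoint (opWord X (List.ofFn f)) x‖ ^ 2) ≤ c * ‖x‖ ^ 2) :
    ∃ Δ : H →L[ℂ] H,
      (∀ x y : H, Filter.Tendsto (fun N : ℕ =>
          (inner ℂ x y : ℂ) + ∑ p ∈ Finset.Icc 1 N, ∑ f : Fin p → Fin n,
            (a (List.ofFn f) : ℂ) *
              (inner ℂ (ContinuousLinearMap.adjoint (opWord X (List.ofFn f)) x)
                (ContinuousLinearMap.adjoint (opWord X (List.ofFn f)) y) : ℂ))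
        Filter.atTop (𝓝 (inner ℂ x (Δ y) : ℂ))) ∧
      (∀ x : H, 0 ≤ (inner ℂ x (Δ x) : ℂ).re) ∧
      (∀ x y : H, Filter.Tendsto (fun N : ℕ =>
          ∑ p ∈ Finset.range (N + 1), ∑ f : Fin p → Fin n,
            (b (List.ofFn f) : ℂ) *
              (inner ℂ (ContinuousLinearMap.adjoint (opWord X (List.ofFn f)) x)
                (Δ (ContinuousLinearMap.adjoint (opWord X (List.ofFn f)) y)) : ℂ))
        Filter.atTop (𝓝 (inner ℂ x y : ℂ))) := by
  have hab : ∀ γ : Word n, γ ≠ [] → Word.conv a b γ = 0 := fun γ hγ => by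
    rw [Word.conv, sum_range_succ_eq_add_sum_Icc]
    simpa [ha0] using hinv γ hγ
  have hQ : AbsSeriesLE X a (1 + c) := absSeriesLE_of_forall_sum_Icc_le ha0 hcI
  obtain ⟨Δ, hΔ⟩ := hQ.exists_inner_eq_deltaForm (by linarith)
  refine ⟨Δ, fun x y => ?_, fun x => ?_, fun x y => ?_⟩
  · rw [hΔ, deltaForm]
    simpa [Word.sum_upTo_eq_add_sum_Icc, ha0, adjoint_opWord_nil] using
      (hQ.summable_mul_inner x y).hasSum.tendsto_sum_upTo
  · rw [hΔ]
    nlinarith [hQ.re_deltaForm_self ha0 x, sq_nonneg ‖x‖]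
  · simpa [Word.sum_upTo] using (hasSum_mul_inner_delta hQ hc1 ha0 hb0 (fun β => (hbpos β).le)
      hab (Word.conv_swap_eq_zero ha0 hb0 hab) hΔ x y).tendsto_sum_upTo
end
end

section
/- Let b: F_n^+ → ℝ_{>0} satisfy b_{g_0}=1 and the condition b_{β g_i}/b_{g_j β g_i} ≤ b_β/b_{g_j β} for all words β and all i,j ∈ {1,…,n}. Then for the inverse coefficients a_α defined by a_{g_0}=1 and b_γ + ∑_{βα=γ,|β|≥1} a_β b_α = 0 (|γ|≥1), one has a_α ≤ 0 for all |α| ≥ 1 and a_{g_i} < 0 for every i. -/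
noncomputable section

/-!
Telescoping the hypothesis on `b` over the letters of a prefix `w` gives
`b (β ++ [i]) / b (w ++ β ++ [i]) ≤ b β / b (w ++ β)`. Expanding the defining recursion of
`a (γ ++ [i])` and comparing it term by term with that of `a γ`, the coefficients `a (γ.take k)`
being nonpositive by induction, yields
`a (γ ++ [i]) ≤ -b (γ ++ [i]) + (b (γ ++ [i]) / b γ) * b γ = 0`.
-/

section

variable {n : ℕ} {a b : Word n → ℝ}

theorem div_prepend_append_singleton_le (hbpos : ∀ α, 0 < b α)
    (hcond : ∀ (β : Word n) (i j : Fin n),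
      b (β ++ [i]) / b (j :: (β ++ [i])) ≤ b β / b (j :: β))
    (w β : Word n) (i : Fin n) :
    b (β ++ [i]) / b (w ++ β ++ [i]) ≤ b β / b (w ++ β) := by
  induction w with
  | nil => simp [div_self (hbpos _).ne']
  | cons j w ih =>
    have hj := hcond (w ++ β) i j
    simp only [List.cons_append, List.append_assoc] at ih hj ⊢
    calc b (β ++ [i]) / b (j :: (w ++ (β ++ [i])))
        = b (β ++ [i]) / b (w ++ (β ++ [i])) *
            (b (w ++ (β ++ [i])) / b (j :: (w ++ (β ++ [i])))) := by
          field_simp [(hbpos (w ++ (β ++ [i]))).ne']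
      _ ≤ b β / b (w ++ β) * (b (w ++ β) / b (j :: (w ++ β))) :=
          mul_le_mul ih hj (div_pos (hbpos _) (hbpos _)).le (div_pos (hbpos _) (hbpos _)).le
      _ = b β / b (j :: (w ++ β)) := by field_simp [(hbpos (w ++ β)).ne']

theorem inv_coeff_append_singleton (hb0 : b [] = 1)
    (hinv : ∀ γ : Word n, γ ≠ [] →
      b γ + ∑ k ∈ Finset.Icc 1 γ.length, a (γ.take k) * b (γ.drop k) = 0)
    (γ : Word n) (i : Fin n) :
    a (γ ++ [i]) =
      -b (γ ++ [i]) - ∑ k ∈ Finset.Icc 1 γ.length, a (γ.take k) * b (γ.drop k ++ [i]) := by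
  have h := hinv (γ ++ [i]) (by simp)
  rw [List.length_append, List.length_singleton,
    Finset.sum_Icc_succ_top (Nat.le_add_left 1 _), List.take_of_length_le (by simp),
    List.drop_of_length_le (by simp), hb0, mul_one] at h
  have hterms : ∀ k ∈ Finset.Icc 1 γ.length,
      a ((γ ++ [i]).take k) * b ((γ ++ [i]).drop k) = a (γ.take k) * b (γ.drop k ++ [i]) := by
    intro k hk
    have hkγ : k ≤ γ.length := (Finset.mem_Icc.1 hk).2
    rw [List.take_append_of_le_length hkγ, List.drop_append_of_le_length hkγ]
  rw [Finset.sum_congr rfl hterms] at h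
  linarith

theorem inv_coeff_append_singleton_nonpos (hbpos : ∀ α, 0 < b α) (hb0 : b [] = 1)
    (hcond : ∀ (β : Word n) (i j : Fin n),
      b (β ++ [i]) / b (j :: (β ++ [i])) ≤ b β / b (j :: β))
    (hinv : ∀ γ : Word n, γ ≠ [] →
      b γ + ∑ k ∈ Finset.Icc 1 γ.length, a (γ.take k) * b (γ.drop k) = 0)
    (γ : Word n) (i : Fin n) (hprefix : ∀ k ∈ Finset.Icc 1 γ.length, a (γ.take k) ≤ 0) :
    a (γ ++ [i]) ≤ 0 := by
  rw [inv_coeff_append_singleton hb0 hinv]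
  obtain rfl | hγ := eq_or_ne γ []
  · simpa using (hbpos [i]).le
  set r := b (γ ++ [i]) / b γ
  have hterm : ∀ k ∈ Finset.Icc 1 γ.length,
      r * (a (γ.take k) * b (γ.drop k)) ≤ a (γ.take k) * b (γ.drop k ++ [i]) := by
    intro k hk
    have hratio := div_prepend_append_singleton_le hbpos hcond (γ.take k) (γ.drop k) i
    rw [List.take_append_drop, div_le_iff₀ (hbpos _)] at hratio
    calc r * (a (γ.take k) * b (γ.drop k))
        = a (γ.take k) * (b (γ.drop k) / b γ * b (γ ++ [i])) := by ring
      _ ≤ a (γ.take k) * b (γ.drop k ++ [i]) :=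
          mul_le_mul_of_nonpos_left hratio (hprefix k hk)
  have hγsum : ∑ k ∈ Finset.Icc 1 γ.length, a (γ.take k) * b (γ.drop k) = -b γ := by
    linarith [hinv γ hγ]
  have hr : r * b γ = b (γ ++ [i]) := div_mul_cancel₀ _ (hbpos γ).ne'
  have hsum := Finset.sum_le_sum hterm
  rw [← Finset.mul_sum, hγsum] at hsum
  linarith

theorem inv_coeff_take_nonpos (hbpos : ∀ α, 0 < b α) (hb0 : b [] = 1)
    (hcond : ∀ (β : Word n) (i j : Fin n),
      b (β ++ [i]) / b (j :: (β ++ [i])) ≤ b β / b (j :: β))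
    (hinv : ∀ γ : Word n, γ ≠ [] →
      b γ + ∑ k ∈ Finset.Icc 1 γ.length, a (γ.take k) * b (γ.drop k) = 0)
    (γ : Word n) : ∀ k ∈ Finset.Icc 1 γ.length, a (γ.take k) ≤ 0 := by
  induction γ using List.reverseRecOn with
  | nil => simp
  | append_singleton γ i ih =>
    intro k hk
    rw [List.length_append, List.length_singleton, Finset.mem_Icc] at hk
    obtain hkγ | rfl := Nat.le_succ_iff.1 hk.2
    · rw [List.take_append_of_le_length hkγ]
      exact ih k (Finset.mem_Icc.2 ⟨hk.1, hkγ⟩)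
    · rw [List.take_of_length_le (by simp)]
      exact inv_coeff_append_singleton_nonpos hbpos hb0 hcond hinv γ i ih

end

theorem stmt8_general {n : ℕ} (a b : Word n → ℝ) (hbpos : ∀ α, 0 < b α) (hb0 : b [] = 1)
    (hcond : ∀ (β : Word n) (i j : Fin n),
      b (β ++ [i]) / b (j :: (β ++ [i])) ≤ b β / b (j :: β))
    (hinv : ∀ γ : Word n, γ ≠ [] →
      b γ + ∑ k ∈ Finset.Icc 1 γ.length, a (γ.take k) * b (γ.drop k) = 0) :
    (∀ α : Word n, α ≠ [] → a α ≤ 0) ∧ (∀ i : Fin n, a [i] < 0) := by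
  refine ⟨fun α hα => ?_, fun i => ?_⟩
  · have hlen : α.length ∈ Finset.Icc 1 α.length :=
      Finset.mem_Icc.2 ⟨List.length_pos_iff.2 hα, le_rfl⟩
    simpa using inv_coeff_take_nonpos hbpos hb0 hcond hinv α α.length hlen
  · have hsingle : a [i] = -b [i] := by simpa using inv_coeff_append_singleton hb0 hinv [] i
    linarith [hbpos [i]]

/-- if `b : F_n^+ → ℝ_{>0}` satisfies `b_{g₀}=1` and
`b_{βg_i}/b_{g_jβg_i} ≤ b_β/b_{g_jβ}` for all words `β` and letters `i,j`, then the
coefficients `a` of the inverse power series (determined by `a_{g₀}=1` and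
`b_γ + ∑_{βα=γ, |β|≥1} a_β b_α = 0` for `|γ|≥1`) satisfy `a_α ≤ 0` for `|α| ≥ 1` and
`a_{g_i} < 0` for every `i`. -/
theorem stmt8 {n : ℕ} (a b : Word n → ℝ) (hbpos : ∀ α, 0 < b α) (hb0 : b [] = 1)
    (hcond : ∀ (β : Word n) (i j : Fin n),
      b (β ++ [i]) / b (j :: (β ++ [i])) ≤ b β / b (j :: β))
    (ha0 : a [] = 1)
    (hinv : ∀ γ : Word n, γ ≠ [] →
      b γ + ∑ k ∈ Finset.Icc 1 γ.length, a (γ.take k) * b (γ.drop k) = 0) :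
    (∀ α : Word n, α ≠ [] → a α ≤ 0) ∧ (∀ i : Fin n, a [i] < 0) :=
  stmt8_general a b hbpos hb0 hcond hinv
end
end

section
/- Let g = 1 + ∑_{|α|≥1} b_α Z_α with inverse g^{-1} = 1 + ∑_{|α|≥1} a_α Z_α where a_α ≤ 0 for all |α| ≥ 1 and a_{g_i} < 0 for all i (a regular domain). Then the coefficients satisfy the supermultiplicativity inequality b_α b_β ≤ b_{αβ} for all words α, β ∈ F_n^+. -/
/-!
Writing `c = -a`, the relation `g * g⁻¹ = 1` becomes the renewal equation
`b γ = ∑_{1 ≤ k ≤ |γ|} c (γ.take k) * b (γ.drop k)` with nonnegative kernel `c`. Expanding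
`b α` this way and applying induction to `b (α.drop k) * b β` bounds `b α * b β` by the part of
the expansion of `b (α ++ β)` indexed by `k ≤ |α|`; the remaining terms are nonnegative.
-/

noncomputable section

namespace List

variable {ι R : Type*} [Semiring R] [PartialOrder R] [IsOrderedRing R]
  {c b : List ι → R}

theorem sum_Icc_take_mul_drop_append_le (hc : ∀ u ≠ [], 0 ≤ c u) (hb : ∀ u, 0 ≤ b u)
    (hrec : ∀ u ≠ [], b u = ∑ k ∈ Finset.Icc 1 u.length, c (u.take k) * b (u.drop k))
    {u : List ι} (hu : u ≠ []) (v : List ι) :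
    ∑ k ∈ Finset.Icc 1 u.length, c (u.take k) * b (u.drop k ++ v) ≤ b (u ++ v) := by
  have huv : u ++ v ≠ [] := by simp [hu]
  have hsub : Finset.Icc 1 u.length ⊆ Finset.Icc 1 (u ++ v).length :=
    Finset.Icc_subset_Icc le_rfl (by simp)
  rw [hrec _ huv]
  calc ∑ k ∈ Finset.Icc 1 u.length, c (u.take k) * b (u.drop k ++ v)
      = ∑ k ∈ Finset.Icc 1 u.length, c ((u ++ v).take k) * b ((u ++ v).drop k) := by
        refine Finset.sum_congr rfl fun k hk => ?_
        have hk : k ≤ u.length := (Finset.mem_Icc.mp hk).2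
        rw [take_append_of_le_length hk, drop_append_of_le_length hk]
    _ ≤ _ := by
        refine Finset.sum_le_sum_of_subset_of_nonneg hsub fun k hk _ => ?_
        have hk : 1 ≤ k := (Finset.mem_Icc.mp hk).1
        exact mul_nonneg (hc _ (by simp [take_eq_nil_iff, hu]; omega)) (hb _)

theorem mul_le_append_of_eq_sum_take_mul_drop (hc : ∀ u ≠ [], 0 ≤ c u)
    (hb : ∀ u, 0 ≤ b u) (hb_nil : b [] = 1)
    (hrec : ∀ u ≠ [], b u = ∑ k ∈ Finset.Icc 1 u.length, c (u.take k) * b (u.drop k)) :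
    ∀ u v : List ι, b u * b v ≤ b (u ++ v)
  | u, v => by
    rcases eq_or_ne u [] with rfl | hu
    · simp [hb_nil]
    calc b u * b v
        = ∑ k ∈ Finset.Icc 1 u.length, c (u.take k) * (b (u.drop k) * b v) := by
          rw [hrec u hu, Finset.sum_mul]
          simp only [mul_assoc]
      _ ≤ ∑ k ∈ Finset.Icc 1 u.length, c (u.take k) * b (u.drop k ++ v) := by
          refine Finset.sum_le_sum fun k hk => ?_
          have hk : 1 ≤ k := (Finset.mem_Icc.mp hk).1
          exact mul_le_mul_of_nonneg_left
            (mul_le_append_of_eq_sum_take_mul_drop hc hb hb_nil hrec _ v)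
            (hc _ (by simp [take_eq_nil_iff, hu]; omega))
      _ ≤ b (u ++ v) := sum_Icc_take_mul_drop_append_le hc hb hrec hu v
termination_by u => u.length
decreasing_by simp [length_pos_iff.mpr hu]; omega

end List

theorem stmt9_general {n : ℕ} (a b : Word n → ℝ) (hbpos : ∀ α, 0 < b α) (hb0 : b [] = 1)
    (hinv : ∀ γ : Word n, γ ≠ [] →
      b γ + ∑ k ∈ Finset.Icc 1 γ.length, a (γ.take k) * b (γ.drop k) = 0)
    (haneg : ∀ α : Word n, α ≠ [] → a α ≤ 0) :
    ∀ α β : Word n, b α * b β ≤ b (α ++ β) := by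
  refine List.mul_le_append_of_eq_sum_take_mul_drop (c := fun u => -a u)
    (fun u hu => neg_nonneg.mpr (haneg u hu)) (fun u => (hbpos u).le) hb0 fun γ hγ => ?_
  simp only [neg_mul, Finset.sum_neg_distrib]
  linarith [hinv γ hγ]

/-- let `g = 1 + ∑ b_α Z_α` (with `b_{g₀}=1`, `b_α > 0`) have inverse
`g⁻¹ = 1 + ∑ a_α Z_α` with `a_α ≤ 0` for all `|α| ≥ 1` and `a_{g_i} < 0` for all `i` (a
regular domain).  Then `b_α b_β ≤ b_{αβ}` for all words `α, β`. -/
theorem stmt9 {n : ℕ} (a b : Word n → ℝ) (hbpos : ∀ α, 0 < b α) (hb0 : b [] = 1)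
    (ha0 : a [] = 1)
    (hinv : ∀ γ : Word n, γ ≠ [] →
      b γ + ∑ k ∈ Finset.Icc 1 γ.length, a (γ.take k) * b (γ.drop k) = 0)
    (haneg : ∀ α : Word n, α ≠ [] → a α ≤ 0)
    (hagen : ∀ i : Fin n, a [i] < 0) :
    ∀ α β : Word n, b α * b β ≤ b (α ++ β) :=
  stmt9_general a b hbpos hb0 hinv haneg
end
end

section
/- Fix s ∈ [1,∞) and a formal power series φ = ∑_{|α|≥1} d_α Z_α with d_α ≥ 0 and d_{g_i} > 0 for each i. Define ψ_s := (1-φ)^{-s} = 1 + ∑_{k=1}^∞ C(s+k-1, k) φ^k, with coefficients b_α = ∑_{j=1}^{|α|} C(s+j-1,j) ∑_{γ_1⋯γ_j=α, |γ_i|≥1} d_{γ_1}⋯d_{γ_j} for |α| ≥ 1 and b_{g_0}=1. Then b_{g_i α} ≥ d_{g_i} b_α and b_{α g_i} ≥ d_{g_i} b_α for every word α and every i; in particular b_α/b_{g_iα} ≤ 1/d_{g_i} and b_α/b_{αg_i} ≤ 1/d_{g_i}. -/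
noncomputable section

/-- The generalized binomial coefficient `C(s+j-1, j) = s(s+1)⋯(s+j-1)/j!`. -/
def genBinom (s : ℝ) (j : ℕ) : ℝ :=
  (∏ t ∈ Finset.range j, (s + t)) / (Nat.factorial j)

/-- The `i`-th piece of the decomposition of the word `α` according to the
composition `c` of `α.length` into nonempty blocks. -/
def piece {n : ℕ} (α : Word n) {m : ℕ} (c : Composition m) (i : Fin c.length) : Word n :=
  (α.drop (c.sizeUpTo i)).take (c.blocksFun i)

/-!
Prepending (or appending) the one-letter block `g_i` maps the compositions of `α` injectively
to compositions of `g_i α` (or `α g_i`): it multiplies the weight `d_{γ₁} ⋯ d_{γ_j}` by `d_{g_i}`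
and raises the number of blocks `j` by one. As `C(s+j-1, j)` is increasing in `j` for `s ≥ 1`,
every term of `d_{g_i} b_α` is dominated by a term of `b_{g_i α}`, and all other terms of
`b_{g_i α}` are nonnegative.
-/

open Function

theorem Fintype.sum_le_sum_of_injective {ι κ M : Type*} [Fintype ι] [Fintype κ]
    [AddCommMonoid M] [PartialOrder M] [IsOrderedAddMonoid M] {f : ι → κ} (hf : Injective f)
    {g : ι → M} {h : κ → M} (hh : ∀ k, 0 ≤ h k) (hgh : ∀ i, g i ≤ h (f i)) :
    ∑ i, g i ≤ ∑ k, h k :=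
  calc ∑ i, g i ≤ ∑ i, h (f i) := Finset.sum_le_sum fun i _ => hgh i
    _ = ∑ k ∈ Finset.univ.map ⟨f, hf⟩, h k := (Finset.sum_map Finset.univ ⟨f, hf⟩ h).symm
    _ ≤ ∑ k, h k := Finset.sum_le_sum_of_subset_of_nonneg (Finset.subset_univ _)
        fun k _ _ => hh k

theorem div_le_one_div_of_mul_le {K : Type*} [Field K] [LinearOrder K] [IsStrictOrderedRing K]
    {a b c : K} (hb : 0 ≤ b) (hc : 0 < c) (h : c * a ≤ b) : a / b ≤ 1 / c :=
  div_le_of_le_mul₀ hb (one_div_pos.2 hc).le (by rwa [one_div_mul_eq_div, le_div_iff₀' hc])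

theorem List.splitWrtComposition_eq_of_flatten_eq {α : Type*} {n : ℕ} {l : List α}
    {L : List (List α)} {c : Composition n} (hl : L.flatten = l) (hc : L.map length = c.blocks) :
    l.splitWrtComposition c = L := by
  subst hl
  have hn : n = L.flatten.length := by
    rw [← c.blocks_sum, ← hc, List.length_flatten]
  exact List.splitWrtComposition_flatten L (c.cast hn) hc

section genBinom

variable {s : ℝ}

theorem genBinom_zero (s : ℝ) : genBinom s 0 = 1 := by
  simp [genBinom]

theorem genBinom_succ (s : ℝ) (j : ℕ) :
    genBinom s (j + 1) = genBinom s j * ((s + j) / (j + 1)) := by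
  unfold genBinom
  rw [Finset.prod_range_succ, Nat.factorial_succ]
  push_cast
  field_simp

theorem genBinom_nonneg (hs : 0 ≤ s) (j : ℕ) : 0 ≤ genBinom s j := by
  unfold genBinom
  positivity

theorem genBinom_monotone (hs : 1 ≤ s) : Monotone (genBinom s) := by
  refine monotone_nat_of_le_succ fun j => ?_
  rw [genBinom_succ]
  refine le_mul_of_one_le_right (genBinom_nonneg (by linarith) j) ?_
  rw [one_le_div (by positivity)]
  linarith

end genBinom

section negPowCoeff

variable {n : ℕ} {s : ℝ} {d : Word n → ℝ}

/-- The coefficient `b_α` of `Z_α` in `(1 - ∑_γ d_γ Z_γ)^{-s}`; the composition `c` splits `α`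
into the blocks `γ₁ ⋯ γ_j`. -/
def negPowCoeff (s : ℝ) (d : Word n → ℝ) (α : Word n) : ℝ :=
  ∑ c : Composition α.length, genBinom s c.length * ((α.splitWrtComposition c).map d).prod

theorem piece_eq_getElem_splitWrtComposition (α : Word n) {m : ℕ} (c : Composition m)
    (i : Fin c.length) :
    piece α c i = (α.splitWrtComposition c)[(i : ℕ)]'(by simp) := by
  rw [List.getElem_splitWrtComposition, c.sizeUpTo_succ', List.drop_take,
    Nat.add_sub_cancel_left, piece]

theorem prod_piece (α : Word n) {m : ℕ} (c : Composition m) (d : Word n → ℝ) :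
    ∏ i : Fin c.length, d (piece α c i) = ((α.splitWrtComposition c).map d).prod := by
  rw [← Fin.prod_univ_fun_getElem, ← Fin.prod_congr' _ (α.length_splitWrtComposition c).symm]
  simp only [piece_eq_getElem_splitWrtComposition]
  rfl

theorem negPowCoeff_nil (s : ℝ) (d : Word n → ℝ) : negPowCoeff s d [] = 1 := by
  have hblocks : ∀ c : Composition 0, c.blocks = [] := fun c => c.blocks_eq_nil.2 rfl
  have hsplit : ∀ c : Composition 0, ([] : Word n).splitWrtComposition c = [] := fun c =>
    List.splitWrtComposition_eq_of_flatten_eq rfl (hblocks c).symm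
  simp [negPowCoeff, hsplit, Composition.length, hblocks, genBinom_zero, composition_card]

theorem negPowCoeff_nonneg (hs : 0 ≤ s) (hd : ∀ γ, 0 ≤ d γ) (α : Word n) :
    0 ≤ negPowCoeff s d α :=
  Finset.sum_nonneg fun _ _ =>
    mul_nonneg (genBinom_nonneg hs _) (List.prod_nonneg (List.forall_mem_map.2 fun γ _ => hd γ))

theorem mul_negPowCoeff_le_of_injective (hs : 1 ≤ s) (hd : ∀ γ, 0 ≤ d γ) {α β : Word n}
    (f : Composition α.length → Composition β.length) (hf : Injective f) {x : ℝ} (hx : 0 ≤ x)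
    (hlen : ∀ c, (f c).length = c.length + 1)
    (hprod : ∀ c, ((β.splitWrtComposition (f c)).map d).prod
      = x * ((α.splitWrtComposition c).map d).prod) :
    x * negPowCoeff s d α ≤ negPowCoeff s d β := by
  have hprod_nonneg : ∀ L : List (Word n), 0 ≤ (L.map d).prod := fun L =>
    List.prod_nonneg (List.forall_mem_map.2 fun γ _ => hd γ)
  rw [negPowCoeff, Finset.mul_sum]
  refine Fintype.sum_le_sum_of_injective hf (fun c => ?_) fun c => ?_
  · exact mul_nonneg (genBinom_nonneg (by linarith) _) (hprod_nonneg _)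
  · rw [hlen, hprod, mul_left_comm]
    exact mul_le_mul_of_nonneg_right (genBinom_monotone hs c.length.le_succ)
      (mul_nonneg hx (hprod_nonneg _))

theorem mul_negPowCoeff_le_append_left (hs : 1 ≤ s) (hd : ∀ γ, 0 ≤ d γ) {γ : Word n}
    (hγ : γ ≠ []) (α : Word n) : d γ * negPowCoeff s d α ≤ negPowCoeff s d (γ ++ α) := by
  have hlen : γ.length + α.length = (γ ++ α).length := List.length_append.symm
  refine mul_negPowCoeff_le_of_injective hs hd
    (fun c => ((Composition.single _ (List.length_pos_of_ne_nil hγ)).append c).cast hlen)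
    (fun c₁ c₂ h => ?_) (hd γ) (fun c => by simp [Composition.length]) (fun c => ?_)
  · exact Composition.ext (by simpa using congrArg Composition.blocks h)
  · rw [List.splitWrtComposition_eq_of_flatten_eq (L := γ :: α.splitWrtComposition c) (by simp)
      (by simp [List.map_length_splitWrtComposition]), List.map_cons, List.prod_cons]

theorem mul_negPowCoeff_le_append_right (hs : 1 ≤ s) (hd : ∀ γ, 0 ≤ d γ) {γ : Word n}
    (hγ : γ ≠ []) (α : Word n) : d γ * negPowCoeff s d α ≤ negPowCoeff s d (α ++ γ) := by
  have hlen : α.length + γ.length = (α ++ γ).length := List.length_append.symm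
  refine mul_negPowCoeff_le_of_injective hs hd
    (fun c => (c.append (Composition.single _ (List.length_pos_of_ne_nil hγ))).cast hlen)
    (fun c₁ c₂ h => ?_) (hd γ) (fun c => by simp [Composition.length]) (fun c => ?_)
  · exact Composition.ext (by simpa using congrArg Composition.blocks h)
  · rw [List.splitWrtComposition_eq_of_flatten_eq (L := α.splitWrtComposition c ++ [γ])
      (by simp) (by simp [List.map_length_splitWrtComposition]), List.map_append,
      List.prod_append, List.map_singleton, List.prod_singleton, mul_comm]

end negPowCoeff

/-- fix `s ≥ 1` and `φ = ∑_{|α|≥1} d_α Z_α` with `d_α ≥ 0`, `d_{g_i} > 0`.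
The coefficients of `ψ_s = (1-φ)^{-s}` are `b_{g₀}=1` and
`b_α = ∑_{j=1}^{|α|} C(s+j-1,j) ∑_{γ₁⋯γ_j=α, |γ_i|≥1} d_{γ₁}⋯d_{γ_j}` (the inner sums
being parametrized by compositions of `α.length`).  Then `b_{g_iα} ≥ d_{g_i} b_α` and
`b_{αg_i} ≥ d_{g_i} b_α`; in particular `b_α/b_{g_iα} ≤ 1/d_{g_i}` and
`b_α/b_{αg_i} ≤ 1/d_{g_i}`. -/
theorem stmt10 {n : ℕ} (s : ℝ) (hs : 1 ≤ s) (d : Word n → ℝ)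
    (hd : ∀ α, 0 ≤ d α) (hdg : ∀ i : Fin n, 0 < d [i])
    (b : Word n → ℝ) (hb0 : b [] = 1)
    (hb : ∀ α : Word n, α ≠ [] → b α = ∑ c : Composition α.length,
        genBinom s c.length * ∏ i : Fin c.length, d (piece α c i)) :
    ∀ (α : Word n) (i : Fin n),
      (d [i] * b α ≤ b (i :: α)) ∧ (d [i] * b α ≤ b (α ++ [i])) ∧
      (b α / b (i :: α) ≤ 1 / d [i]) ∧ (b α / b (α ++ [i]) ≤ 1 / d [i]) := by
  have hb_eq : b = negPowCoeff s d := funext fun α => by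
    rcases eq_or_ne α [] with rfl | hα
    · rw [hb0, negPowCoeff_nil]
    · simp only [hb α hα, prod_piece, negPowCoeff]
  subst hb_eq
  intro α i
  have hcons := mul_negPowCoeff_le_append_left hs hd (List.cons_ne_nil i []) α
  have happend := mul_negPowCoeff_le_append_right hs hd (List.cons_ne_nil i []) α
  have hb_nonneg : ∀ β, 0 ≤ negPowCoeff s d β := negPowCoeff_nonneg (by linarith) hd
  exact ⟨hcons, happend, div_le_one_div_of_mul_le (hb_nonneg _) (hdg i) hcons,
    div_le_one_div_of_mul_le (hb_nonneg _) (hdg i) happend⟩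
end
end

section
/- Let W = (W_1,…,W_n) be the weighted left creation operators for positive weights {b_α} with b_{g_0}=1 and sup b_α/b_{g_iα} < ∞. Then the C*-algebra C*(W) generated by W_1,…,W_n and the identity is irreducible: any bounded operator A on F²(H_n) commuting with every element of C*(W) (equivalently with all W_i and W_i*) is a scalar multiple of the identity. -/
open scoped ENNReal

noncomputable section

lemma fock_apply_eq_inner {n : ℕ} (f : Fock n) (γ : Word n) :
    f γ = @inner ℂ _ _ (fockE γ) f := by
  rw [fockE, lp.inner_single_left]
  simp

/-- the C*-algebra generated by the weighted left creation operators
`W₁,…,W_n` (for positive weights `b` with `b_{g₀}=1` and `sup_α b_α/b_{g_iα} < ∞`) and the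
identity is irreducible: any bounded operator `A` on `F²(H_n)` commuting with all `W_i` and
all `W_i*` (equivalently, with every element of `C*(W)`) is a scalar multiple of the
identity. -/
theorem stmt16 {n : ℕ} (b : Word n → ℝ) (hbpos : ∀ α, 0 < b α) (hb0 : b [] = 1)
    (hsup : ∀ i : Fin n, ∃ C : ℝ, ∀ α, b α / b (i :: α) ≤ C)
    (W : Fin n → (Fock n →L[ℂ] Fock n))
    (hW : ∀ (i : Fin n) (α : Word n), W i (fockE α) =
      (Real.sqrt (b α / b (i :: α)) : ℂ) • fockE (i :: α))
    (A : Fock n →L[ℂ] Fock n)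
    (hA1 : ∀ i : Fin n, A * W i = W i * A)
    (hA2 : ∀ i : Fin n, A * ContinuousLinearMap.adjoint (W i) =
      ContinuousLinearMap.adjoint (W i) * A) :
    ∃ c : ℂ, A = c • (1 : Fock n →L[ℂ] Fock n) := by
  set c : ℂ := A (fockE []) [] with hc
  have hs : ∀ (i : Fin n) (α : Word n), (Real.sqrt (b α / b (i :: α)) : ℂ) ≠ 0 := by
    intro i α
    have : 0 < Real.sqrt (b α / b (i :: α)) :=
      Real.sqrt_pos.mpr (div_pos (hbpos α) (hbpos (i :: α)))
    exact_mod_cast this.ne'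
  have hsE : ∀ (i : Fin n) (α : Word n),
      fockE (i :: α) = (Real.sqrt (b α / b (i :: α)) : ℂ)⁻¹ • W i (fockE α) := by
    intro i α
    rw [hW, smul_smul, inv_mul_cancel₀ (hs i α), one_smul]
  -- adjoint of W i kills the vacuum
  have hadj0 : ∀ i : Fin n, ContinuousLinearMap.adjoint (W i) (fockE []) = 0 := by
    intro i
    refine lp.ext (funext fun γ => ?_)
    rw [fock_apply_eq_inner, ContinuousLinearMap.adjoint_inner_right, hW, inner_smul_left,
      ← fock_apply_eq_inner]
    simp [fockE, lp.single_apply]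
  -- hence also A of the vacuum is killed by the adjoints
  have hadjA0 : ∀ i : Fin n, ContinuousLinearMap.adjoint (W i) (A (fockE [])) = 0 := by
    intro i
    have h := congrArg (fun T : Fock n →L[ℂ] Fock n => T (fockE [])) (hA2 i)
    simp only [ContinuousLinearMap.mul_apply] at h
    rw [← h, hadj0, map_zero]
  -- A acts as the scalar c on the vacuum
  have hA0 : A (fockE []) = c • fockE [] := by
    refine lp.ext (funext fun β => ?_)
    match β with
    | [] =>
      show A (fockE []) [] = (c • fockE ([] : Word n)) []
      rw [lp.coeFn_smul]
      simp [fockE, lp.single_apply, hc]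
    | (i :: γ) =>
      have h1 : A (fockE []) (i :: γ) = @inner ℂ _ _ (fockE (i :: γ)) (A (fockE [])) :=
        fock_apply_eq_inner _ _
      have h2 : @inner ℂ _ _ (W i (fockE γ)) (A (fockE []))
          = @inner ℂ _ _ (fockE γ) (ContinuousLinearMap.adjoint (W i) (A (fockE []))) :=
        (ContinuousLinearMap.adjoint_inner_right _ _ _).symm
      rw [h1, hsE i γ, inner_smul_left, h2, hadjA0, inner_zero_right, mul_zero,
        lp.coeFn_smul]
      simp [fockE, lp.single_apply]
  -- A acts as c on every basis vector, by induction on the word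
  have hAE : ∀ α : Word n, A (fockE α) = c • fockE α := by
    intro α
    induction α with
    | nil => exact hA0
    | cons i γ ih =>
      have h := congrArg (fun T : Fock n →L[ℂ] Fock n => T (fockE γ)) (hA1 i)
      simp only [ContinuousLinearMap.mul_apply] at h
      rw [hsE i γ, map_smul, h, ih, map_smul, smul_comm, ← hsE i γ]
  -- conclude by density / summability
  refine ⟨c, ?_⟩
  ext x
  have hx : HasSum (fun α : Word n => lp.single 2 α (x α)) x :=
    lp.hasSum_single ENNReal.ofNat_ne_top x
  have hx1 : HasSum (fun α : Word n => A (lp.single 2 α (x α))) (A x) := hx.mapL A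
  have hx2 : HasSum (fun α : Word n => A (lp.single 2 α (x α))) (c • x) := by
    have := hx.mapL (c • (1 : Fock n →L[ℂ] Fock n))
    simp only [ContinuousLinearMap.smul_apply, ContinuousLinearMap.one_apply] at this
    convert this using 2 with α
    have hsingle : lp.single (E := fun _ : Word n => ℂ) 2 α (x α) = x α • fockE α := by
      rw [fockE, ← lp.single_smul]
      simp
    rw [hsingle, map_smul, hAE, smul_comm]
  rw [hx1.unique hx2]
  simp
end
end
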